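/- Let δ be a nonzero PPT state on ℂ²⊗ℂ²⊗ℂᴺ which is an edge state, let P, Q, R, S be positive semidefinite matrices with Range(P) = ker(δ), Range(Q) = ker(δ^{t_A}), Range(R) = ker(δ^{t_B}), Range(S) = ker(δ^{t_{AB}}), let ε := inf { ⟨e⊗f⊗g, (P + Q^{t_A} + R^{t_B} + S^{t_{AB}}) (e⊗f⊗g)⟩ : e, f ∈ ℂ², g ∈ ℂᴺ unit vectors }, and set W := P + Q^{t_A} + R^{t_B} + S^{t_{AB}} − ε·𝟙. Then (i) Tr(W σ) ≥ 0 for every separable state σ on ℂ²⊗ℂ²⊗ℂᴺ with Tr(σ) = 1, and (ii) Tr(W δ) = −ε · Tr(δ) < 0; hence W is an entanglement witness detecting the PPT entangled edge state δ. -/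

import Mathlib

/-!
Write `X = P + Q^{t_A} + R^{t_B} + S^{t_{AB}}`. Partial transposition is self-adjoint for the
trace pairing, so `Tr(X δ) = Tr(P δ) + Tr(Q δ^{t_A}) + Tr(R δ^{t_B}) + Tr(S δ^{t_{AB}}) = 0`, each
of `P, Q, R, S` being supported on the kernel of the matching partial transpose of `δ`. On a
product vector `v = e ⊗ f ⊗ g`, partial transposition of the operator becomes partial
conjugation of the vector, so `⟨v, X v⟩` is a sum of four nonnegative terms; by homogeneity
`⟨v, (X - ε) v⟩ ≥ 0` for all product vectors, which gives `Tr(W σ) ≥ 0` on separable `σ`.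

The infimum `ε` is attained on the compact product of unit spheres. If it were `0`, the
minimizing `e ⊗ f ⊗ g` and its partial conjugates would lie in the kernels of `P, Q, R, S`, i.e.
(all matrices being Hermitian, `ker P = range δ` etc.) in the ranges of `δ` and of its partial
transposes, which an edge state forbids. Hence `ε > 0` and `Tr(W δ) = -ε Tr δ < 0`.
-/

open Matrix BigOperators ComplexOrder

noncomputable section

/-- Partial transpose with respect to Alice (the first `Fin 2` factor). -/
def ptA {N : ℕ} (ρ : Matrix (Fin 2 × Fin 2 × Fin N) (Fin 2 × Fin 2 × Fin N) ℂ) :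
    Matrix (Fin 2 × Fin 2 × Fin N) (Fin 2 × Fin 2 × Fin N) ℂ :=
  fun x y => ρ (y.1, x.2.1, x.2.2) (x.1, y.2.1, y.2.2)

/-- Partial transpose with respect to Bob (the second `Fin 2` factor). -/
def ptB {N : ℕ} (ρ : Matrix (Fin 2 × Fin 2 × Fin N) (Fin 2 × Fin 2 × Fin N) ℂ) :
    Matrix (Fin 2 × Fin 2 × Fin N) (Fin 2 × Fin 2 × Fin N) ℂ :=
  fun x y => ρ (x.1, y.2.1, x.2.2) (y.1, x.2.1, y.2.2)

/-- Partial transpose with respect to Alice and Bob. -/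
def ptAB {N : ℕ} (ρ : Matrix (Fin 2 × Fin 2 × Fin N) (Fin 2 × Fin 2 × Fin N) ℂ) :
    Matrix (Fin 2 × Fin 2 × Fin N) (Fin 2 × Fin 2 × Fin N) ℂ :=
  ptB (ptA ρ)

/-- PPT: all partial transposes are positive semidefinite. -/
def IsPPT {N : ℕ} (ρ : Matrix (Fin 2 × Fin 2 × Fin N) (Fin 2 × Fin 2 × Fin N) ℂ) : Prop :=
  (ptA ρ).PosSemidef ∧ (ptB ρ).PosSemidef ∧ (ptAB ρ).PosSemidef

/-- The product vector `e ⊗ f ⊗ g`. -/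
def prodVec {N : ℕ} (e f : Fin 2 → ℂ) (g : Fin N → ℂ) : Fin 2 × Fin 2 × Fin N → ℂ :=
  fun x => e x.1 * f x.2.1 * g x.2.2

/-- The rank-one outer product `v v†`. -/
def outer {n : Type*} (v : n → ℂ) : Matrix n n ℂ := Matrix.vecMulVec v (star v)

/-- Full separability of a tripartite state. -/
def SeparableState {N : ℕ} (ρ : Matrix (Fin 2 × Fin 2 × Fin N) (Fin 2 × Fin 2 × Fin N) ℂ) : Prop :=
  ∃ (k : ℕ) (p : Fin k → ℝ) (e f : Fin k → Fin 2 → ℂ) (g : Fin k → Fin N → ℂ),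
    (∀ i, 0 ≤ p i) ∧
    ρ = ∑ i, (p i : ℂ) • outer (prodVec (e i) (f i) (g i))

/-- Reduced matrix of Alice. -/
def redA {N : ℕ} (ρ : Matrix (Fin 2 × Fin 2 × Fin N) (Fin 2 × Fin 2 × Fin N) ℂ) :
    Matrix (Fin 2) (Fin 2) ℂ :=
  fun a a' => ∑ b : Fin 2, ∑ c : Fin N, ρ (a, b, c) (a', b, c)

/-- Reduced matrix of Bob. -/
def redB {N : ℕ} (ρ : Matrix (Fin 2 × Fin 2 × Fin N) (Fin 2 × Fin 2 × Fin N) ℂ) :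
    Matrix (Fin 2) (Fin 2) ℂ :=
  fun b b' => ∑ a : Fin 2, ∑ c : Fin N, ρ (a, b, c) (a, b', c)

/-- Reduced matrix of Charlie. -/
def redC {N : ℕ} (ρ : Matrix (Fin 2 × Fin 2 × Fin N) (Fin 2 × Fin 2 × Fin N) ℂ) :
    Matrix (Fin N) (Fin N) ℂ :=
  fun c c' => ∑ a : Fin 2, ∑ b : Fin 2, ρ (a, b, c) (a, b, c')

/-- `ρ` is supported on `ℂ² ⊗ ℂ² ⊗ ℂᴺ`: all single-party reduced matrices have full rank. -/
def SupportedOn {N : ℕ} (ρ : Matrix (Fin 2 × Fin 2 × Fin N) (Fin 2 × Fin 2 × Fin N) ℂ) : Prop :=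
  (redA ρ).rank = 2 ∧ (redB ρ).rank = 2 ∧ (redC ρ).rank = N

/-- `v` is in the range of the matrix `M`. -/
def InRange {N : ℕ} (M : Matrix (Fin 2 × Fin 2 × Fin N) (Fin 2 × Fin 2 × Fin N) ℂ)
    (v : Fin 2 × Fin 2 × Fin N → ℂ) : Prop :=
  ∃ w, M.mulVec w = v

/-- A PPT state `δ` is an edge state: no nonzero product vector `e⊗f⊗g` lies in the range
of `δ` with its partial conjugates in the ranges of the partial transposes. -/
def IsEdgeState {N : ℕ} (δ : Matrix (Fin 2 × Fin 2 × Fin N) (Fin 2 × Fin 2 × Fin N) ℂ) :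
    Prop :=
  ¬ ∃ (e f : Fin 2 → ℂ) (g : Fin N → ℂ), e ≠ 0 ∧ f ≠ 0 ∧ g ≠ 0 ∧
    InRange δ (prodVec e f g) ∧
    InRange (ptA δ) (prodVec (star e) f g) ∧
    InRange (ptB δ) (prodVec e (star f) g) ∧
    InRange (ptAB δ) (prodVec (star e) (star f) g)

/-- The set of values `⟨e⊗f⊗g, (P + Q^{t_A} + R^{t_B} + S^{t_{AB}}) e⊗f⊗g⟩` over unit
vectors `e`, `f`, `g`. -/
def epsSet {N : ℕ} (P Q R S : Matrix (Fin 2 × Fin 2 × Fin N) (Fin 2 × Fin 2 × Fin N) ℂ) :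
    Set ℝ :=
  {r : ℝ | ∃ (e f : Fin 2 → ℂ) (g : Fin N → ℂ),
    star e ⬝ᵥ e = 1 ∧ star f ⬝ᵥ f = 1 ∧ star g ⬝ᵥ g = 1 ∧
    (r : ℂ) = star (prodVec e f g) ⬝ᵥ
      (P + ptA Q + ptB R + ptAB S).mulVec (prodVec e f g)}

namespace Matrix

variable {n : Type*} [Fintype n]

lemma trace_mul_eq_sum_prod {R : Type*} [CommRing R] (A B : Matrix n n R) :
    (A * B).trace = ∑ p : n × n, A p.1 p.2 * B p.2 p.1 := by
  simp only [trace, diag, mul_apply, Fintype.sum_prod_type]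

lemma trace_mul_vecMulVec_star {R : Type*} [CommRing R] [StarRing R] (M : Matrix n n R)
    (v : n → R) : (M * vecMulVec v (star v)).trace = star v ⬝ᵥ M *ᵥ v := by
  rw [mul_vecMulVec, trace_vecMulVec, dotProduct_comm]

lemma mul_eq_zero_iff_range_le_ker {R : Type*} [CommRing R] {A B : Matrix n n R} :
    A * B = 0 ↔ LinearMap.range B.mulVecLin ≤ LinearMap.ker A.mulVecLin := by
  classical
  rw [LinearMap.range_le_ker_iff, ← mulVecLin_mul]
  constructor
  · intro h
    rw [h]
    ext
    simp
  · intro h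
    exact toLin'.injective (LinearMap.ext fun v => by simpa using LinearMap.congr_fun h v)

lemma trace_mul_eq_zero_of_range_le_ker {R : Type*} [CommRing R] {A B : Matrix n n R}
    (h : LinearMap.range A.mulVecLin ≤ LinearMap.ker B.mulVecLin) : (A * B).trace = 0 := by
  rw [trace_mul_comm, mul_eq_zero_iff_range_le_ker.mpr h, trace_zero]

/-- `M P = 0` gives `P M = 0` by taking adjoints, i.e. `range M ≤ ker P`; equality then follows
from rank–nullity. -/
lemma range_mulVecLin_eq_ker_of_range_eq_ker {𝕜 : Type*} [Field 𝕜] [StarRing 𝕜]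
    {M P : Matrix n n 𝕜} (hM : M.IsHermitian) (hP : P.IsHermitian)
    (h : LinearMap.range P.mulVecLin = LinearMap.ker M.mulVecLin) :
    LinearMap.range M.mulVecLin = LinearMap.ker P.mulVecLin := by
  have hMP : M * P = 0 := mul_eq_zero_iff_range_le_ker.mpr h.le
  have hPM : P * M = 0 := by
    rw [← hM.eq, ← hP.eq, ← conjTranspose_mul, hMP, conjTranspose_zero]
  refine Submodule.eq_of_le_of_finrank_eq (mul_eq_zero_iff_range_le_ker.mp hPM) ?_
  have hrM := LinearMap.finrank_range_add_finrank_ker M.mulVecLin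
  have hrP := LinearMap.finrank_range_add_finrank_ker P.mulVecLin
  rw [h] at hrP
  omega

lemma PosSemidef.trace_pos_of_ne_zero {𝕜 : Type*} [RCLike 𝕜] {A : Matrix n n 𝕜}
    (hA : A.PosSemidef) (h : A ≠ 0) : 0 < A.trace :=
  hA.trace_nonneg.lt_of_ne' (mt hA.trace_eq_zero_iff.mp h)

end Matrix

section ComplexVectors

variable {ι : Type*} [Fintype ι]

lemma star_dotProduct_self_eq_norm_sq (v : ι → ℂ) :
    star v ⬝ᵥ v = ((‖WithLp.toLp 2 v‖ : ℝ) : ℂ) ^ 2 := by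
  have := inner_self_eq_norm_sq_to_K (𝕜 := ℂ) (WithLp.toLp 2 v)
  rwa [EuclideanSpace.inner_toLp_toLp, dotProduct_comm] at this

lemma ne_zero_of_star_dotProduct_self_eq_one {v : ι → ℂ} (h : star v ⬝ᵥ v = 1) : v ≠ 0 := by
  rintro rfl
  simp at h

lemma isCompact_setOf_star_dotProduct_self_eq_one :
    IsCompact {v : ι → ℂ | star v ⬝ᵥ v = 1} := by
  have h : {v : ι → ℂ | star v ⬝ᵥ v = 1} =
      (PiLp.homeomorph 2 fun _ : ι => ℂ).symm ⁻¹' Metric.sphere 0 1 := by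
    ext v
    rw [Set.mem_ofPred_eq, star_dotProduct_self_eq_norm_sq]
    norm_cast
    rw [pow_eq_one_iff_of_nonneg (norm_nonneg _) two_ne_zero]
    simp [PiLp.homeomorph]
  rw [h, Homeomorph.isCompact_preimage]
  exact isCompact_sphere 0 1

lemma exists_pos_smul_unit {v : ι → ℂ} (hv : v ≠ 0) :
    ∃ c : ℝ, 0 < c ∧ star ((c : ℂ) • v) ⬝ᵥ ((c : ℂ) • v) = 1 := by
  have hn : 0 < ‖WithLp.toLp 2 v‖ := norm_pos_iff.mpr (by simpa using hv)
  refine ⟨‖WithLp.toLp 2 v‖⁻¹, inv_pos.mpr hn, ?_⟩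
  rw [star_dotProduct_self_eq_norm_sq, WithLp.toLp_smul, norm_smul, Complex.norm_real,
    Real.norm_of_nonneg (inv_nonneg.mpr hn.le), inv_mul_cancel₀ hn.ne']
  simp

lemma star_ofReal_smul_dotProduct_mulVec (M : Matrix ι ι ℂ) (c : ℝ) (v : ι → ℂ) :
    star ((c : ℂ) • v) ⬝ᵥ M *ᵥ ((c : ℂ) • v) = (c : ℂ) ^ 2 * (star v ⬝ᵥ M *ᵥ v) := by
  simp only [star_smul, mulVec_smul, smul_dotProduct, dotProduct_smul, smul_eq_mul,
    Complex.star_def, Complex.conj_ofReal]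
  ring

lemma trace_mul_outer (M : Matrix ι ι ℂ) (v : ι → ℂ) :
    (M * outer v).trace = star v ⬝ᵥ M *ᵥ v :=
  trace_mul_vecMulVec_star M v

end ComplexVectors

abbrev TriIdx (N : ℕ) := Fin 2 × Fin 2 × Fin N

section PartialTranspose

variable {N : ℕ}

def swapAlice : Equiv.Perm (TriIdx N × TriIdx N) :=
  Function.Involutive.toPerm (fun p => ((p.2.1, p.1.2), (p.1.1, p.2.2))) fun _ => rfl

def swapBob : Equiv.Perm (TriIdx N × TriIdx N) :=
  Function.Involutive.toPerm
    (fun p => ((p.1.1, p.2.2.1, p.1.2.2), (p.2.1, p.1.2.1, p.2.2.2))) fun _ => rfl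

lemma trace_ptA_mul (Q δ : Matrix (TriIdx N) (TriIdx N) ℂ) :
    (ptA Q * δ).trace = (Q * ptA δ).trace := by
  rw [trace_mul_eq_sum_prod, trace_mul_eq_sum_prod, ← Equiv.sum_comp swapAlice]
  rfl

lemma trace_ptB_mul (R δ : Matrix (TriIdx N) (TriIdx N) ℂ) :
    (ptB R * δ).trace = (R * ptB δ).trace := by
  rw [trace_mul_eq_sum_prod, trace_mul_eq_sum_prod, ← Equiv.sum_comp swapBob]
  rfl

lemma trace_ptAB_mul (S δ : Matrix (TriIdx N) (TriIdx N) ℂ) :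
    (ptAB S * δ).trace = (S * ptAB δ).trace := by
  rw [ptAB, trace_ptB_mul, trace_ptA_mul]
  rfl

lemma Matrix.IsHermitian.ptA {M : Matrix (TriIdx N) (TriIdx N) ℂ} (h : M.IsHermitian) :
    (ptA M).IsHermitian :=
  Matrix.ext fun _ _ => h.apply _ _

lemma Matrix.IsHermitian.ptB {M : Matrix (TriIdx N) (TriIdx N) ℂ} (h : M.IsHermitian) :
    (ptB M).IsHermitian :=
  Matrix.ext fun _ _ => h.apply _ _

lemma Matrix.IsHermitian.ptAB {M : Matrix (TriIdx N) (TriIdx N) ℂ} (h : M.IsHermitian) :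
    (ptAB M).IsHermitian :=
  h.ptA.ptB

lemma ptA_outer_prodVec (e f : Fin 2 → ℂ) (g : Fin N → ℂ) :
    ptA (outer (prodVec e f g)) = outer (prodVec (star e) f g) := by
  ext x y
  simp only [ptA, outer, prodVec, vecMulVec_apply, Pi.star_apply, star_mul', star_star]
  ring

lemma ptB_outer_prodVec (e f : Fin 2 → ℂ) (g : Fin N → ℂ) :
    ptB (outer (prodVec e f g)) = outer (prodVec e (star f) g) := by
  ext x y
  simp only [ptB, outer, prodVec, vecMulVec_apply, Pi.star_apply, star_mul', star_star]
  ring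

lemma ptAB_outer_prodVec (e f : Fin 2 → ℂ) (g : Fin N → ℂ) :
    ptAB (outer (prodVec e f g)) = outer (prodVec (star e) (star f) g) := by
  rw [ptAB, ptA_outer_prodVec, ptB_outer_prodVec]

lemma dotProduct_ptA_mulVec_prodVec (M : Matrix (TriIdx N) (TriIdx N) ℂ) (e f : Fin 2 → ℂ)
    (g : Fin N → ℂ) :
    star (prodVec e f g) ⬝ᵥ ptA M *ᵥ prodVec e f g
      = star (prodVec (star e) f g) ⬝ᵥ M *ᵥ prodVec (star e) f g := by
  rw [← trace_mul_outer, ← trace_mul_outer, trace_ptA_mul, ptA_outer_prodVec]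

lemma dotProduct_ptB_mulVec_prodVec (M : Matrix (TriIdx N) (TriIdx N) ℂ) (e f : Fin 2 → ℂ)
    (g : Fin N → ℂ) :
    star (prodVec e f g) ⬝ᵥ ptB M *ᵥ prodVec e f g
      = star (prodVec e (star f) g) ⬝ᵥ M *ᵥ prodVec e (star f) g := by
  rw [← trace_mul_outer, ← trace_mul_outer, trace_ptB_mul, ptB_outer_prodVec]

lemma dotProduct_ptAB_mulVec_prodVec (M : Matrix (TriIdx N) (TriIdx N) ℂ) (e f : Fin 2 → ℂ)
    (g : Fin N → ℂ) :
    star (prodVec e f g) ⬝ᵥ ptAB M *ᵥ prodVec e f g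
      = star (prodVec (star e) (star f) g) ⬝ᵥ M *ᵥ prodVec (star e) (star f) g := by
  rw [← trace_mul_outer, ← trace_mul_outer, trace_ptAB_mul, ptAB_outer_prodVec]

end PartialTranspose

section ProductVectors

variable {N : ℕ}

lemma prodVec_smul (a b c : ℂ) (e f : Fin 2 → ℂ) (g : Fin N → ℂ) :
    prodVec (a • e) (b • f) (c • g) = (a * b * c) • prodVec e f g := by
  ext x
  simp only [prodVec, Pi.smul_apply, smul_eq_mul]
  ring

lemma star_prodVec_dotProduct_prodVec (e f e' f' : Fin 2 → ℂ) (g g' : Fin N → ℂ) :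
    star (prodVec e f g) ⬝ᵥ prodVec e' f' g'
      = (star e ⬝ᵥ e') * (star f ⬝ᵥ f') * (star g ⬝ᵥ g') := by
  simp only [dotProduct, Fintype.sum_prod_type, Finset.sum_mul, Finset.mul_sum, prodVec,
    Pi.star_apply, star_mul']
  conv_lhs => rw [Finset.sum_comm]; enter [2, b]; rw [Finset.sum_comm]
  rw [Finset.sum_comm]
  exact Finset.sum_congr rfl fun _ _ => Finset.sum_congr rfl fun _ _ =>
    Finset.sum_congr rfl fun _ _ => by ring

lemma dotProduct_mulVec_prodVec_nonneg_of_forall_unit {W : Matrix (TriIdx N) (TriIdx N) ℂ}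
    (h : ∀ (e f : Fin 2 → ℂ) (g : Fin N → ℂ), star e ⬝ᵥ e = 1 → star f ⬝ᵥ f = 1 →
      star g ⬝ᵥ g = 1 → 0 ≤ star (prodVec e f g) ⬝ᵥ W *ᵥ prodVec e f g)
    (e f : Fin 2 → ℂ) (g : Fin N → ℂ) :
    0 ≤ star (prodVec e f g) ⬝ᵥ W *ᵥ prodVec e f g := by
  by_cases hzero : e = 0 ∨ f = 0 ∨ g = 0
  · have : prodVec e f g = 0 := by
      rcases hzero with rfl | rfl | rfl <;> ext <;> simp [prodVec]
    simp [this]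
  push Not at hzero
  obtain ⟨a, ha, hae⟩ := exists_pos_smul_unit hzero.1
  obtain ⟨b, hb, hbf⟩ := exists_pos_smul_unit hzero.2.1
  obtain ⟨c, hc, hcg⟩ := exists_pos_smul_unit hzero.2.2
  have := h _ _ _ hae hbf hcg
  rw [prodVec_smul, ← Complex.ofReal_mul, ← Complex.ofReal_mul,
    star_ofReal_smul_dotProduct_mulVec] at this
  have habc : (0 : ℂ) < ((a * b * c : ℝ) : ℂ) ^ 2 := by
    rw [← Complex.ofReal_pow]
    exact Complex.zero_lt_real.mpr (by positivity)
  exact le_of_mul_le_mul_left (by rwa [mul_zero]) habc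

lemma trace_mul_nonneg_of_separable {W σ : Matrix (TriIdx N) (TriIdx N) ℂ}
    (hW : ∀ (e f : Fin 2 → ℂ) (g : Fin N → ℂ), 0 ≤ star (prodVec e f g) ⬝ᵥ W *ᵥ prodVec e f g)
    (hσ : SeparableState σ) : 0 ≤ (W * σ).trace := by
  obtain ⟨k, p, e, f, g, hp, rfl⟩ := hσ
  simp only [Matrix.mul_sum, trace_sum, Matrix.mul_smul, trace_smul, trace_mul_outer, smul_eq_mul]
  exact Finset.sum_nonneg fun i _ => mul_nonneg (Complex.zero_le_real.mpr (hp i)) (hW _ _ _)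

end ProductVectors

section Witness

variable {N : ℕ}

def ptSum (P Q R S : Matrix (TriIdx N) (TriIdx N) ℂ) : Matrix (TriIdx N) (TriIdx N) ℂ :=
  P + ptA Q + ptB R + ptAB S

lemma inRange_of_mulVec_eq_zero {M P : Matrix (TriIdx N) (TriIdx N) ℂ} (hM : M.IsHermitian)
    (hP : P.IsHermitian) (h : LinearMap.range P.mulVecLin = LinearMap.ker M.mulVecLin)
    {v : TriIdx N → ℂ} (hv : P *ᵥ v = 0) : InRange M v := by
  have hv' : v ∈ LinearMap.ker P.mulVecLin := hv
  rw [← range_mulVecLin_eq_ker_of_range_eq_ker hM hP h] at hv'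
  exact LinearMap.mem_range.mp hv'

variable {P Q R S : Matrix (TriIdx N) (TriIdx N) ℂ}

lemma dotProduct_ptSum_mulVec_prodVec (e f : Fin 2 → ℂ) (g : Fin N → ℂ) :
    star (prodVec e f g) ⬝ᵥ ptSum P Q R S *ᵥ prodVec e f g =
      star (prodVec e f g) ⬝ᵥ P *ᵥ prodVec e f g
        + star (prodVec (star e) f g) ⬝ᵥ Q *ᵥ prodVec (star e) f g
        + star (prodVec e (star f) g) ⬝ᵥ R *ᵥ prodVec e (star f) g
        + star (prodVec (star e) (star f) g) ⬝ᵥ S *ᵥ prodVec (star e) (star f) g := by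
  simp only [ptSum, add_mulVec, dotProduct_add, dotProduct_ptA_mulVec_prodVec,
    dotProduct_ptB_mulVec_prodVec, dotProduct_ptAB_mulVec_prodVec]

lemma dotProduct_ptSum_mulVec_prodVec_nonneg (hP : P.PosSemidef) (hQ : Q.PosSemidef)
    (hR : R.PosSemidef) (hS : S.PosSemidef) (e f : Fin 2 → ℂ) (g : Fin N → ℂ) :
    0 ≤ star (prodVec e f g) ⬝ᵥ ptSum P Q R S *ᵥ prodVec e f g := by
  rw [dotProduct_ptSum_mulVec_prodVec]
  exact add_nonneg (add_nonneg (add_nonneg (hP.dotProduct_mulVec_nonneg _)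
    (hQ.dotProduct_mulVec_nonneg _)) (hR.dotProduct_mulVec_nonneg _))
    (hS.dotProduct_mulVec_nonneg _)

lemma not_isEdgeState_of_dotProduct_ptSum_mulVec_prodVec_eq_zero
    {δ : Matrix (TriIdx N) (TriIdx N) ℂ} (hδ : δ.IsHermitian)
    (hP : P.PosSemidef) (hQ : Q.PosSemidef) (hR : R.PosSemidef) (hS : S.PosSemidef)
    (hPr : LinearMap.range P.mulVecLin = LinearMap.ker δ.mulVecLin)
    (hQr : LinearMap.range Q.mulVecLin = LinearMap.ker (ptA δ).mulVecLin)
    (hRr : LinearMap.range R.mulVecLin = LinearMap.ker (ptB δ).mulVecLin)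
    (hSr : LinearMap.range S.mulVecLin = LinearMap.ker (ptAB δ).mulVecLin)
    {e f : Fin 2 → ℂ} {g : Fin N → ℂ} (he : e ≠ 0) (hf : f ≠ 0) (hg : g ≠ 0)
    (h : star (prodVec e f g) ⬝ᵥ ptSum P Q R S *ᵥ prodVec e f g = 0) :
    ¬ IsEdgeState δ := by
  rw [dotProduct_ptSum_mulVec_prodVec] at h
  have hP' := hP.dotProduct_mulVec_nonneg (prodVec e f g)
  have hQ' := hQ.dotProduct_mulVec_nonneg (prodVec (star e) f g)
  have hR' := hR.dotProduct_mulVec_nonneg (prodVec e (star f) g)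
  have hS' := hS.dotProduct_mulVec_nonneg (prodVec (star e) (star f) g)
  obtain ⟨hPQR, hS0⟩ := (add_eq_zero_iff_of_nonneg (by positivity) hS').mp h
  obtain ⟨hPQ, hR0⟩ := (add_eq_zero_iff_of_nonneg (by positivity) hR').mp hPQR
  obtain ⟨hP0, hQ0⟩ := (add_eq_zero_iff_of_nonneg hP' hQ').mp hPQ
  exact fun hedge => hedge ⟨e, f, g, he, hf, hg,
    inRange_of_mulVec_eq_zero hδ hP.1 hPr ((hP.dotProduct_mulVec_zero_iff _).mp hP0),
    inRange_of_mulVec_eq_zero hδ.ptA hQ.1 hQr ((hQ.dotProduct_mulVec_zero_iff _).mp hQ0),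
    inRange_of_mulVec_eq_zero hδ.ptB hR.1 hRr ((hR.dotProduct_mulVec_zero_iff _).mp hR0),
    inRange_of_mulVec_eq_zero hδ.ptAB hS.1 hSr ((hS.dotProduct_mulVec_zero_iff _).mp hS0)⟩

lemma trace_ptSum_mul_eq_zero {δ : Matrix (TriIdx N) (TriIdx N) ℂ}
    (hPr : LinearMap.range P.mulVecLin ≤ LinearMap.ker δ.mulVecLin)
    (hQr : LinearMap.range Q.mulVecLin ≤ LinearMap.ker (ptA δ).mulVecLin)
    (hRr : LinearMap.range R.mulVecLin ≤ LinearMap.ker (ptB δ).mulVecLin)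
    (hSr : LinearMap.range S.mulVecLin ≤ LinearMap.ker (ptAB δ).mulVecLin) :
    (ptSum P Q R S * δ).trace = 0 := by
  rw [ptSum, add_mul, add_mul, add_mul, trace_add, trace_add, trace_add, trace_ptA_mul,
    trace_ptB_mul, trace_ptAB_mul, trace_mul_eq_zero_of_range_le_ker hPr,
    trace_mul_eq_zero_of_range_le_ker hQr, trace_mul_eq_zero_of_range_le_ker hRr,
    trace_mul_eq_zero_of_range_le_ker hSr, add_zero, add_zero, add_zero]

lemma isCompact_epsSet : IsCompact (epsSet P Q R S) := by
  let K := {e : Fin 2 → ℂ | star e ⬝ᵥ e = 1} ×ˢ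
    ({f : Fin 2 → ℂ | star f ⬝ᵥ f = 1} ×ˢ {g : Fin N → ℂ | star g ⬝ᵥ g = 1})
  let q := fun t : (Fin 2 → ℂ) × (Fin 2 → ℂ) × (Fin N → ℂ) =>
    star (prodVec t.1 t.2.1 t.2.2) ⬝ᵥ ptSum P Q R S *ᵥ prodVec t.1 t.2.1 t.2.2
  have hK : IsCompact K := isCompact_setOf_star_dotProduct_self_eq_one.prod
    (isCompact_setOf_star_dotProduct_self_eq_one.prod isCompact_setOf_star_dotProduct_self_eq_one)
  have hq : Continuous q := by
    unfold q prodVec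
    fun_prop
  have hε : epsSet P Q R S = Complex.ofReal ⁻¹' (q '' K) := by
    ext r
    constructor
    · rintro ⟨e, f, g, he, hf, hg, hr⟩
      exact ⟨(e, f, g), ⟨he, hf, hg⟩, hr.symm⟩
    · rintro ⟨⟨e, f, g⟩, ⟨he, hf, hg⟩, hr⟩
      exact ⟨e, f, g, he, hf, hg, hr.symm⟩
  rw [hε]
  exact Complex.isUniformEmbedding_ofReal.isClosedEmbedding.isCompact_preimage (hK.image hq)

lemma nonneg_of_mem_epsSet (hP : P.PosSemidef) (hQ : Q.PosSemidef) (hR : R.PosSemidef)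
    (hS : S.PosSemidef) {r : ℝ} (hr : r ∈ epsSet P Q R S) : 0 ≤ r := by
  obtain ⟨e, f, g, -, -, -, hr⟩ := hr
  exact Complex.zero_le_real.mp (hr ▸ dotProduct_ptSum_mulVec_prodVec_nonneg hP hQ hR hS e f g)

lemma ofReal_re_dotProduct_ptSum_mulVec_prodVec (hP : P.PosSemidef) (hQ : Q.PosSemidef)
    (hR : R.PosSemidef) (hS : S.PosSemidef) (e f : Fin 2 → ℂ) (g : Fin N → ℂ) :
    ((star (prodVec e f g) ⬝ᵥ ptSum P Q R S *ᵥ prodVec e f g).re : ℂ) =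
      star (prodVec e f g) ⬝ᵥ ptSum P Q R S *ᵥ prodVec e f g :=
  (Complex.eq_re_of_ofReal_le (r := 0) (by
    simpa using dotProduct_ptSum_mulVec_prodVec_nonneg hP hQ hR hS e f g)).symm

lemma re_mem_epsSet (hP : P.PosSemidef) (hQ : Q.PosSemidef) (hR : R.PosSemidef)
    (hS : S.PosSemidef) {e f : Fin 2 → ℂ} {g : Fin N → ℂ} (he : star e ⬝ᵥ e = 1)
    (hf : star f ⬝ᵥ f = 1) (hg : star g ⬝ᵥ g = 1) :
    (star (prodVec e f g) ⬝ᵥ ptSum P Q R S *ᵥ prodVec e f g).re ∈ epsSet P Q R S :=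
  ⟨e, f, g, he, hf, hg, ofReal_re_dotProduct_ptSum_mulVec_prodVec hP hQ hR hS e f g⟩

lemma sInf_epsSet_le (hP : P.PosSemidef) (hQ : Q.PosSemidef) (hR : R.PosSemidef)
    (hS : S.PosSemidef) {e f : Fin 2 → ℂ} {g : Fin N → ℂ} (he : star e ⬝ᵥ e = 1)
    (hf : star f ⬝ᵥ f = 1) (hg : star g ⬝ᵥ g = 1) :
    ((sInf (epsSet P Q R S) : ℝ) : ℂ) ≤
      star (prodVec e f g) ⬝ᵥ ptSum P Q R S *ᵥ prodVec e f g := by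
  rw [← ofReal_re_dotProduct_ptSum_mulVec_prodVec hP hQ hR hS, Complex.real_le_real]
  exact csInf_le ⟨0, fun _ => nonneg_of_mem_epsSet hP hQ hR hS⟩ (re_mem_epsSet hP hQ hR hS he hf hg)

lemma sInf_epsSet_mem (hN : N ≠ 0) (hP : P.PosSemidef) (hQ : Q.PosSemidef)
    (hR : R.PosSemidef) (hS : S.PosSemidef) : sInf (epsSet P Q R S) ∈ epsSet P Q R S := by
  have hunit : ∀ {ι : Type} [Fintype ι] [DecidableEq ι] (i : ι),
      star (Pi.single i 1 : ι → ℂ) ⬝ᵥ Pi.single i 1 = 1 := fun i => by simp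
  exact isCompact_epsSet.sInf_mem ⟨_, re_mem_epsSet hP hQ hR hS (hunit 0) (hunit 0)
    (hunit (⟨0, Nat.pos_of_ne_zero hN⟩ : Fin N))⟩

lemma sInf_epsSet_pos (hN : N ≠ 0) {δ : Matrix (TriIdx N) (TriIdx N) ℂ} (hδ : δ.IsHermitian)
    (hP : P.PosSemidef) (hQ : Q.PosSemidef) (hR : R.PosSemidef) (hS : S.PosSemidef)
    (hPr : LinearMap.range P.mulVecLin = LinearMap.ker δ.mulVecLin)
    (hQr : LinearMap.range Q.mulVecLin = LinearMap.ker (ptA δ).mulVecLin)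
    (hRr : LinearMap.range R.mulVecLin = LinearMap.ker (ptB δ).mulVecLin)
    (hSr : LinearMap.range S.mulVecLin = LinearMap.ker (ptAB δ).mulVecLin)
    (hedge : IsEdgeState δ) : 0 < sInf (epsSet P Q R S) := by
  have hmem := sInf_epsSet_mem hN hP hQ hR hS
  refine (nonneg_of_mem_epsSet hP hQ hR hS hmem).lt_of_ne fun h0 => ?_
  obtain ⟨e, f, g, he, hf, hg, hq⟩ := hmem
  refine not_isEdgeState_of_dotProduct_ptSum_mulVec_prodVec_eq_zero hδ hP hQ hR hS hPr hQr hRr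
    hSr (ne_zero_of_star_dotProduct_self_eq_one he) (ne_zero_of_star_dotProduct_self_eq_one hf)
    (ne_zero_of_star_dotProduct_self_eq_one hg) ?_ hedge
  rw [ptSum, ← hq, ← h0, Complex.ofReal_zero]

lemma dotProduct_ptSum_sub_sInf_epsSet_mulVec_prodVec_nonneg (hP : P.PosSemidef)
    (hQ : Q.PosSemidef) (hR : R.PosSemidef) (hS : S.PosSemidef) (e f : Fin 2 → ℂ)
    (g : Fin N → ℂ) :
    0 ≤ star (prodVec e f g) ⬝ᵥ
      (ptSum P Q R S - ((sInf (epsSet P Q R S) : ℝ) : ℂ) • 1) *ᵥ prodVec e f g := by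
  refine dotProduct_mulVec_prodVec_nonneg_of_forall_unit (fun e f g he hf hg => ?_) e f g
  rw [sub_mulVec, dotProduct_sub, smul_mulVec, one_mulVec, dotProduct_smul,
    star_prodVec_dotProduct_prodVec, he, hf, hg, sub_nonneg]
  simpa using sInf_epsSet_le hP hQ hR hS he hf hg

end Witness

theorem edge_state_witness_general (N : ℕ)
    (δ P Q R S : Matrix (Fin 2 × Fin 2 × Fin N) (Fin 2 × Fin 2 × Fin N) ℂ)
    (hδpos : δ.PosSemidef) (hδne : δ ≠ 0) (hedge : IsEdgeState δ)
    (hP : P.PosSemidef) (hQ : Q.PosSemidef) (hR : R.PosSemidef) (hS : S.PosSemidef)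
    (hPr : LinearMap.range P.mulVecLin = LinearMap.ker δ.mulVecLin)
    (hQr : LinearMap.range Q.mulVecLin = LinearMap.ker (ptA δ).mulVecLin)
    (hRr : LinearMap.range R.mulVecLin = LinearMap.ker (ptB δ).mulVecLin)
    (hSr : LinearMap.range S.mulVecLin = LinearMap.ker (ptAB δ).mulVecLin) :
    (∀ σ : Matrix (Fin 2 × Fin 2 × Fin N) (Fin 2 × Fin 2 × Fin N) ℂ,
      SeparableState σ → σ.trace = 1 →
      0 ≤ ((P + ptA Q + ptB R + ptAB S
            - ((sInf (epsSet P Q R S) : ℝ) : ℂ) • (1 : Matrix _ _ ℂ)) * σ).trace) ∧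
    ((P + ptA Q + ptB R + ptAB S
        - ((sInf (epsSet P Q R S) : ℝ) : ℂ) • (1 : Matrix _ _ ℂ)) * δ).trace
      = -((sInf (epsSet P Q R S) : ℝ) : ℂ) * δ.trace ∧
    ((P + ptA Q + ptB R + ptAB S
        - ((sInf (epsSet P Q R S) : ℝ) : ℂ) • (1 : Matrix _ _ ℂ)) * δ).trace < 0 := by
  rw [show P + ptA Q + ptB R + ptAB S = ptSum P Q R S from rfl]
  have hN : N ≠ 0 := by
    rintro rfl
    exact hδne (Matrix.ext fun x => x.2.2.elim0)
  have hε := sInf_epsSet_pos hN hδpos.1 hP hQ hR hS hPr hQr hRr hSr hedge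
  have htrace : ((ptSum P Q R S - ((sInf (epsSet P Q R S) : ℝ) : ℂ) • 1) * δ).trace =
      -((sInf (epsSet P Q R S) : ℝ) : ℂ) * δ.trace := by
    rw [sub_mul, trace_sub, trace_ptSum_mul_eq_zero hPr.le hQr.le hRr.le hSr.le, smul_mul,
      one_mul, trace_smul, smul_eq_mul, zero_sub, neg_mul]
  refine ⟨fun σ hσ _ => trace_mul_nonneg_of_separable
    (dotProduct_ptSum_sub_sInf_epsSet_mulVec_prodVec_nonneg hP hQ hR hS) hσ, htrace, ?_⟩
  rw [htrace, neg_mul, neg_lt_zero]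
  exact mul_pos (Complex.zero_lt_real.mpr hε) (hδpos.trace_pos_of_ne_zero hδne)

/-- The canonical entanglement witness `W = P + Q^{t_A} + R^{t_B} + S^{t_{AB}} - ε·𝟙`
associated with an edge state `δ` is nonnegative on all normalized separable states and
strictly negative on `δ`. -/
theorem edge_state_witness (N : ℕ)
    (δ P Q R S : Matrix (Fin 2 × Fin 2 × Fin N) (Fin 2 × Fin 2 × Fin N) ℂ)
    (hδpos : δ.PosSemidef) (hδppt : IsPPT δ) (hδne : δ ≠ 0) (hedge : IsEdgeState δ)
    (hP : P.PosSemidef) (hQ : Q.PosSemidef) (hR : R.PosSemidef) (hS : S.PosSemidef)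
    (hPr : LinearMap.range P.mulVecLin = LinearMap.ker δ.mulVecLin)
    (hQr : LinearMap.range Q.mulVecLin = LinearMap.ker (ptA δ).mulVecLin)
    (hRr : LinearMap.range R.mulVecLin = LinearMap.ker (ptB δ).mulVecLin)
    (hSr : LinearMap.range S.mulVecLin = LinearMap.ker (ptAB δ).mulVecLin) :
    (∀ σ : Matrix (Fin 2 × Fin 2 × Fin N) (Fin 2 × Fin 2 × Fin N) ℂ,
      SeparableState σ → σ.trace = 1 →
      0 ≤ ((P + ptA Q + ptB R + ptAB S
            - ((sInf (epsSet P Q R S) : ℝ) : ℂ) • (1 : Matrix _ _ ℂ)) * σ).trace) ∧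
    ((P + ptA Q + ptB R + ptAB S
        - ((sInf (epsSet P Q R S) : ℝ) : ℂ) • (1 : Matrix _ _ ℂ)) * δ).trace
      = -((sInf (epsSet P Q R S) : ℝ) : ℂ) * δ.trace ∧
    ((P + ptA Q + ptB R + ptAB S
        - ((sInf (epsSet P Q R S) : ℝ) : ℂ) • (1 : Matrix _ _ ℂ)) * δ).trace < 0 :=
  edge_state_witness_general N δ P Q R S hδpos hδne hedge hP hQ hR hS hPr hQr hRr hSr

end
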